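/- Let κ ≤ α ≤ ρ with ρ ≥ 0, and let R be a real symmetric (n−1)×(n−1) matrix whose eigenvalues are all ≤ α and whose trace satisfies Tr(R) ≤ β, where β = ρ + (n−2)α − ((n−1)√(ρ−κ) − (n−2)√(ρ−α))². Then Tr(√(ρI − R)) ≥ (n−1)√(ρ−κ). -/

import Mathlib

open scoped ComplexOrder in
/-- The positive semidefinite square root of a positive semidefinite matrix
(the definition `Matrix.PosSemidef.sqrt` of Mathlib, December 2024, since removed). -/
noncomputable def Matrix.PosSemidef.sqrt {n : Type*} {𝕜 : Type*} [Fintype n] [RCLike 𝕜]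
    [DecidableEq n] {A : Matrix n n 𝕜} (hA : A.PosSemidef) : Matrix n n 𝕜 :=
  hA.1.eigenvectorUnitary.1 * Matrix.diagonal ((↑) ∘ (√·) ∘ hA.1.eigenvalues) *
  (star hA.1.eigenvectorUnitary : Matrix n n 𝕜)

/-! The eigenvalues `λᵢ` of `ρI − R` satisfy `λᵢ ≥ ρ − α`, so `tᵢ = √λᵢ ≥ a := √(ρ − α)`, and
`∑ tᵢ² = Tr(ρI − R) ≥ (m − 1)a² + D²` with `D = m√(ρ − κ) − (m − 1)a`. Writing `tᵢ = a + xᵢ`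
with `xᵢ ≥ 0` and using `∑ xᵢ² ≤ (∑ xᵢ)²` gives `∑ tᵢ² ≤ (∑ xᵢ + a)² + (m − 1)a²`, hence
`D ≤ ∑ xᵢ + a`, i.e. `Tr √(ρI − R) = ∑ tᵢ ≥ D + (m − 1)a = m√(ρ − κ)`. -/

theorem Finset.add_mul_le_sum_of_sq_add_mul_le_sum_sq {ι : Type*} {s : Finset ι} {t : ι → ℝ}
    {a D : ℝ} (ha : 0 ≤ a) (hat : ∀ i ∈ s, a ≤ t i)
    (hsq : D ^ 2 + (s.card - 1) * a ^ 2 ≤ ∑ i ∈ s, t i ^ 2) :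
    D + (s.card - 1) * a ≤ ∑ i ∈ s, t i := by
  set x := ∑ i ∈ s, (t i - a)
  have hx : 0 ≤ x := Finset.sum_nonneg fun i hi => sub_nonneg.2 (hat i hi)
  have hsum : ∑ i ∈ s, t i = x + s.card * a := by simp [x, Finset.sum_sub_distrib]
  have hsum_sq : ∑ i ∈ s, t i ^ 2 ≤ (x + a) ^ 2 + (s.card - 1) * a ^ 2 :=
    calc ∑ i ∈ s, t i ^ 2 = ∑ i ∈ s, (t i - a) ^ 2 + 2 * a * x + s.card * a ^ 2 := by
          simp only [x, Finset.mul_sum, ← Finset.sum_add_distrib, ← nsmul_eq_mul,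
            ← Finset.sum_const]
          exact Finset.sum_congr rfl fun i _ => by ring
      _ ≤ x ^ 2 + 2 * a * x + s.card * a ^ 2 := by
          gcongr
          exact Finset.sum_sq_le_sq_sum_of_nonneg fun i hi => sub_nonneg.2 (hat i hi)
      _ = (x + a) ^ 2 + (s.card - 1) * a ^ 2 := by ring
  have hD : D ≤ x + a := le_of_abs_le (abs_le_of_sq_le_sq (by linarith) (by positivity))
  linarith

open scoped ComplexOrder

namespace Matrix

variable {n 𝕜 : Type*} [Fintype n] [DecidableEq n] [RCLike 𝕜] {A : Matrix n n 𝕜}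

theorem PosSemidef.trace_sqrt (hA : A.PosSemidef) :
    hA.sqrt.trace = ∑ i, (√(hA.1.eigenvalues i) : 𝕜) := by
  rw [PosSemidef.sqrt, trace_mul_cycle, Unitary.coe_star_mul_self, one_mul, trace_diagonal]
  rfl

theorem IsHermitian.le_eigenvalues_of_posSemidef_sub (hA : A.IsHermitian) {c : ℝ}
    (hc : (A - (c : 𝕜) • 1).PosSemidef) (i : n) : c ≤ hA.eigenvalues i := by
  have h := hc.re_dotProduct_nonneg (hA.eigenvectorBasis i)
  have hv : star ⇑(hA.eigenvectorBasis i) ⬝ᵥ ⇑(hA.eigenvectorBasis i) = 1 := by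
    rw [dotProduct_comm, ← EuclideanSpace.inner_eq_star_dotProduct, inner_self_eq_norm_sq_to_K,
      hA.eigenvectorBasis.orthonormal.1 i]
    simp
  rw [sub_mulVec, dotProduct_sub, map_sub, ← hA.eigenvalues_eq, smul_mulVec, one_mulVec,
    dotProduct_smul, hv] at h
  simpa using h

end Matrix

theorem mixed_bound_implies_rootRic_general {m : ℕ}
    {R : Matrix (Fin m) (Fin m) ℝ} {κ α ρ : ℝ}
    (hαρ : α ≤ ρ)
    (hα : (α • (1 : Matrix (Fin m) (Fin m) ℝ) - R).PosSemidef)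
    (hρ : (ρ • (1 : Matrix (Fin m) (Fin m) ℝ) - R).PosSemidef)
    (htr : R.trace ≤ ρ + ((m : ℝ) - 1) * α -
      ((m : ℝ) * Real.sqrt (ρ - κ) - ((m : ℝ) - 1) * Real.sqrt (ρ - α)) ^ 2) :
    (m : ℝ) * Real.sqrt (ρ - κ) ≤ hρ.sqrt.trace := by
  have hshift : ρ • 1 - R - (ρ - α) • 1 = α • (1 : Matrix (Fin m) (Fin m) ℝ) - R := by
    rw [sub_smul]; abel
  have hev : ∀ i, ρ - α ≤ hρ.1.eigenvalues i :=
    hρ.1.le_eigenvalues_of_posSemidef_sub (hshift ▸ hα)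
  have htrace : ∑ i, hρ.1.eigenvalues i = ρ * m - R.trace := by
    simpa [Matrix.trace_sub] using hρ.1.trace_eq_sum_eigenvalues.symm
  set a := √(ρ - α)
  set D := m * √(ρ - κ) - (m - 1) * a
  have hsq : D ^ 2 + (Fintype.card (Fin m) - 1) * a ^ 2 ≤ ∑ i, √(hρ.1.eigenvalues i) ^ 2 := by
    simp only [Fintype.card_fin, a, Real.sq_sqrt (sub_nonneg.2 hαρ),
      Real.sq_sqrt (le_trans (sub_nonneg.2 hαρ) (hev _)), htrace]
    linarith
  calc (m : ℝ) * √(ρ - κ) = D + (Fintype.card (Fin m) - 1) * a := by rw [Fintype.card_fin]; ring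
    _ ≤ ∑ i, √(hρ.1.eigenvalues i) := Finset.add_mul_le_sum_of_sq_add_mul_le_sum_sq
          (Real.sqrt_nonneg _) (fun i _ => Real.sqrt_le_sqrt (hev i)) hsq
    _ = hρ.sqrt.trace := by simp [hρ.trace_sqrt]

/-- Mixed sectional/Ricci bound implies root-Ricci class `(ρ,κ)`.
Matrices have size `(n−1) × (n−1)` with `m = n−1`, so `n−2` is `(m:ℝ) − 1`.
If all eigenvalues of `R` are at most `α` (i.e. `αI − R` is PSD),
`Tr R ≤ β := ρ + (n−2)α − ((n−1)√(ρ−κ) − (n−2)√(ρ−α))²`, and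
`κ ≤ α ≤ ρ`, `0 ≤ ρ`, then `Tr √(ρI − R) ≥ (n−1)√(ρ−κ)`. -/
theorem mixed_bound_implies_rootRic {m : ℕ} (hm : 1 ≤ m)
    {R : Matrix (Fin m) (Fin m) ℝ} {κ α ρ : ℝ}
    (hκα : κ ≤ α) (hαρ : α ≤ ρ) (hρ0 : 0 ≤ ρ)
    (hα : (α • (1 : Matrix (Fin m) (Fin m) ℝ) - R).PosSemidef)
    (hρ : (ρ • (1 : Matrix (Fin m) (Fin m) ℝ) - R).PosSemidef)
    (htr : R.trace ≤ ρ + ((m : ℝ) - 1) * α -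
      ((m : ℝ) * Real.sqrt (ρ - κ) - ((m : ℝ) - 1) * Real.sqrt (ρ - α)) ^ 2) :
    (m : ℝ) * Real.sqrt (ρ - κ) ≤ hρ.sqrt.trace :=
  mixed_bound_implies_rootRic_general hαρ hα hρ htr
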